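/- arXiv:math/0309032 — 2 statements merged into one kernel-verified Lean document; each statement's English description precedes it below -/
import Mathlib

section
/- Let u, b be nonnegative continuous on [α, β] and k(t,s) nonnegative continuous for α ≤ s ≤ t ≤ β, and let a ≥ 0 be a constant with p = 2. If u(t) ≤ a + ∫_α^t b(s)·u(s)² ds + ∫_α^t ∫_α^s k(s,τ)·u(τ)² dτ ds for all t ∈ [α, β], then u(t) ≤ a / (1 − a·∫_α^t (b(s) + ∫_α^s k(s,τ) dτ) ds) for all t ∈ [α, β] such that a·∫_α^t (b(s) + ∫_α^s k(s,τ) dτ) ds < 1. -/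
open Real Set intervalIntegral

lemma quad_core (α β a : ℝ) (hαβ : α ≤ β) (ha : 0 < a)
    (u G g : ℝ → ℝ) (hG : Continuous G) (hg : Continuous g)
    (hGnn : ∀ t, α ≤ t → 0 ≤ G t)
    (hbound : ∀ t ∈ Icc α β, u t ≤ a + ∫ s in α..t, G s)
    (hcomp : ∀ t ∈ Icc α β, G t ≤ g t * (a + ∫ s in α..t, G s) ^ 2) :
    ∀ t ∈ Icc α β, a * (∫ s in α..t, g s) < 1 →
      u t ≤ a / (1 - a * ∫ s in α..t, g s) := by
  set v : ℝ → ℝ := fun t => a + ∫ s in α..t, G s with hv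
  have hvd : ∀ t : ℝ, HasDerivAt v (G t) t := by
    intro t
    have : HasDerivAt (fun t => ∫ s in α..t, G s) (G t) t :=
      intervalIntegral.integral_hasDerivAt_right (hG.intervalIntegrable _ _)
        (hG.stronglyMeasurableAtFilter _ _) hG.continuousAt
    simpa [hv] using (this.const_add a)
  have hvpos : ∀ t, α ≤ t → 0 < v t := by
    intro t ht
    have : 0 ≤ ∫ s in α..t, G s :=
      intervalIntegral.integral_nonneg ht (fun s hs => hGnn s hs.1)
    simp only [hv]; linarith
  set φ : ℝ → ℝ := fun t => (∫ s in α..t, g s) + (v t)⁻¹ - a⁻¹ with hφ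
  have hφd : ∀ t ∈ Icc α β, HasDerivAt φ (g t - G t / (v t) ^ 2) t := by
    intro t ht
    have h1 : HasDerivAt (fun t => ∫ s in α..t, g s) (g t) t :=
      intervalIntegral.integral_hasDerivAt_right (hg.intervalIntegrable _ _)
        (hg.stronglyMeasurableAtFilter _ _) hg.continuousAt
    have h2 : HasDerivAt (fun t => (v t)⁻¹) (-G t / (v t) ^ 2) t :=
      (hvd t).inv (ne_of_gt (hvpos t ht.1))
    have := (h1.add h2).sub_const a⁻¹
    convert this using 1
    · rfl
    · rfl
    · rfl
    · ring
  have hφmono : MonotoneOn φ (Icc α β) := by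
    apply monotoneOn_of_deriv_nonneg (convex_Icc α β)
    · exact fun t ht => ((hφd t ht).continuousAt.continuousWithinAt)
    · intro t ht
      rw [interior_Icc] at ht
      exact ((hφd t (Ioo_subset_Icc_self ht)).differentiableAt).differentiableWithinAt
    · intro t ht
      rw [interior_Icc] at ht
      have ht' := Ioo_subset_Icc_self ht
      rw [(hφd t ht').deriv]
      have hv2 : 0 < (v t) ^ 2 := pow_pos (hvpos t ht'.1) 2
      have := hcomp t ht'
      rw [sub_nonneg, div_le_iff₀ hv2]
      exact this
  intro t ht hlt
  have hφt : 0 ≤ φ t := by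
    have h0 : φ α = 0 := by simp [hφ, hv]
    have := hφmono (left_mem_Icc.mpr hαβ) ht ht.1
    linarith
  -- from φ t ≥ 0 : (v t)⁻¹ ≥ a⁻¹ - ∫ g
  set C := ∫ s in α..t, g s with hC
  have hkey : (1 - a * C) / a ≤ (v t)⁻¹ := by
    have : a⁻¹ - C ≤ (v t)⁻¹ := by simp only [hφ] at hφt; linarith
    calc (1 - a * C) / a = a⁻¹ - C := by field_simp
    _ ≤ (v t)⁻¹ := this
  have hvt : 0 < v t := hvpos t ht.1
  have hnum : 0 < 1 - a * C := by linarith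
  have hvle : v t ≤ a / (1 - a * C) := by
    rw [le_div_iff₀ hnum]
    have h1 := mul_le_mul_of_nonneg_left hkey (le_of_lt hvt)
    rw [mul_inv_cancel₀ (ne_of_gt hvt)] at h1
    have h3 : v t * (1 - a * C) = (v t * ((1 - a * C) / a)) * a := by field_simp
    have h4 := mul_le_mul_of_nonneg_right h1 (le_of_lt ha)
    rw [h3]
    linarith [h4]
  exact le_trans (hbound t ht) hvle

lemma quad_aux
    (α β a : ℝ) (hαβ : α ≤ β) (ha : 0 < a)
    (u b : ℝ → ℝ) (k : ℝ → ℝ → ℝ)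
    (hu : ContinuousOn u (Icc α β)) (hb : ContinuousOn b (Icc α β))
    (hk : ContinuousOn (fun q : ℝ × ℝ => k q.1 q.2)
      {q : ℝ × ℝ | α ≤ q.2 ∧ q.2 ≤ q.1 ∧ q.1 ≤ β})
    (hunn : ∀ t ∈ Icc α β, 0 ≤ u t) (hbnn : ∀ t ∈ Icc α β, 0 ≤ b t)
    (hknn : ∀ t s, α ≤ s → s ≤ t → t ≤ β → 0 ≤ k t s)
    (hbound : ∀ t ∈ Icc α β,
      u t ≤ a + (∫ s in α..t, b s * u s ^ 2)
        + (∫ s in α..t, ∫ τ in α..s, k s τ * u τ ^ 2)) :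
    ∀ t ∈ Icc α β,
      a * (∫ s in α..t, (b s + ∫ τ in α..s, k s τ)) < 1 →
      u t ≤ a / (1 - a * ∫ s in α..t, (b s + ∫ τ in α..s, k s τ)) := by
  -- clamp function
  set cl : ℝ → ℝ := fun x => min (max x α) β with hcl
  have hclc : Continuous cl := (continuous_id.max continuous_const).min continuous_const
  have hclmem : ∀ x, cl x ∈ Icc α β := fun x =>
    ⟨le_min (le_max_right _ _) hαβ, min_le_right _ _⟩
  have hcleq : ∀ x ∈ Icc α β, cl x = x := fun x hx => by
    simp [hcl, max_eq_left hx.1, min_eq_left hx.2]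
  -- extended functions
  set U : ℝ → ℝ := fun x => u (cl x) with hU
  set B : ℝ → ℝ := fun x => b (cl x) with hB
  have hUc : Continuous U := hu.comp_continuous hclc hclmem
  have hBc : Continuous B := hb.comp_continuous hclc hclmem
  have hUnn : ∀ x, 0 ≤ U x := fun x => hunn _ (hclmem x)
  have hBnn : ∀ x, 0 ≤ B x := fun x => hbnn _ (hclmem x)
  set K : ℝ → ℝ → ℝ := fun s τ => k (min (max s (cl τ)) β) (cl τ) with hK
  have hφmaps : ∀ q : ℝ × ℝ, (min (max q.1 (cl q.2)) β, cl q.2) ∈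
      {q : ℝ × ℝ | α ≤ q.2 ∧ q.2 ≤ q.1 ∧ q.1 ≤ β} := by
    intro q
    refine ⟨(hclmem q.2).1, le_min (le_max_right _ _) (hclmem q.2).2, min_le_right _ _⟩
  have hKc : Continuous (fun q : ℝ × ℝ => K q.1 q.2) := by
    have hφc : Continuous (fun q : ℝ × ℝ =>
        ((min (max q.1 (cl q.2)) β, cl q.2) : ℝ × ℝ)) := by
      exact (((continuous_fst.max (hclc.comp continuous_snd)).min continuous_const).prodMk
        (hclc.comp continuous_snd))
    exact hk.comp_continuous hφc hφmaps
  have hKnn : ∀ s τ, 0 ≤ K s τ := by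
    intro s τ
    have h := hφmaps (s, τ)
    exact hknn _ _ h.1 h.2.1 h.2.2
  have hKeq : ∀ s τ, α ≤ τ → τ ≤ s → s ≤ β → K s τ = k s τ := by
    intro s τ h1 h2 h3
    have hclτ : cl τ = τ := hcleq τ ⟨h1, le_trans h2 h3⟩
    simp [hK, hclτ, max_eq_left h2, min_eq_left h3]
  -- inner integral functions
  set F : ℝ → ℝ := fun s => ∫ τ in α..s, K s τ * U τ ^ 2 with hF
  set h2 : ℝ → ℝ := fun s => ∫ τ in α..s, K s τ with hh2
  have hFc : Continuous F := by
    apply intervalIntegral.continuous_parametric_intervalIntegral_of_continuous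
      (f := fun s τ => K s τ * U τ ^ 2) (s := fun x : ℝ => x)
    · exact hKc.mul ((hUc.comp continuous_snd).pow 2)
    · exact continuous_id
  have hh2c : Continuous h2 := by
    apply intervalIntegral.continuous_parametric_intervalIntegral_of_continuous
      (f := fun s τ => K s τ) (s := fun x : ℝ => x)
    · exact hKc
    · exact continuous_id
  set G : ℝ → ℝ := fun s => B s * U s ^ 2 + F s with hG
  set g : ℝ → ℝ := fun s => B s + h2 s with hg
  have hGc : Continuous G := (hBc.mul (hUc.pow 2)).add hFc
  have hgc : Continuous g := hBc.add hh2c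
  have hGnn : ∀ t, α ≤ t → 0 ≤ G t := by
    intro t htα
    have hFt : 0 ≤ F t :=
      intervalIntegral.integral_nonneg htα
        (fun τ _ => mul_nonneg (hKnn t τ) (pow_nonneg (hUnn τ) 2))
    have : 0 ≤ B t * U t ^ 2 := mul_nonneg (hBnn t) (pow_nonneg (hUnn t) 2)
    simp only [hG]; linarith
  -- integral equalities
  have E1 : ∀ t ∈ Icc α β,
      (∫ s in α..t, b s * u s ^ 2) = ∫ s in α..t, B s * U s ^ 2 := by
    intro t ht
    apply intervalIntegral.integral_congr
    intro s hs
    rw [uIcc_of_le ht.1] at hs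
    have hs' : s ∈ Icc α β := ⟨hs.1, le_trans hs.2 ht.2⟩
    simp [hB, hU, hcleq s hs']
  have Einner : ∀ s ∈ Icc α β,
      (∫ τ in α..s, k s τ * u τ ^ 2) = F s := by
    intro s hs
    apply intervalIntegral.integral_congr
    intro τ hτ
    rw [uIcc_of_le hs.1] at hτ
    have hτ' : τ ∈ Icc α β := ⟨hτ.1, le_trans hτ.2 hs.2⟩
    show k s τ * u τ ^ 2 = K s τ * U τ ^ 2
    rw [hKeq s τ hτ.1 hτ.2 hs.2, hU]
    simp [hcleq τ hτ']
  have E2 : ∀ t ∈ Icc α β,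
      (∫ s in α..t, ∫ τ in α..s, k s τ * u τ ^ 2) = ∫ s in α..t, F s := by
    intro t ht
    apply intervalIntegral.integral_congr
    intro s hs
    rw [uIcc_of_le ht.1] at hs
    exact Einner s ⟨hs.1, le_trans hs.2 ht.2⟩
  have Einner2 : ∀ s ∈ Icc α β, (∫ τ in α..s, k s τ) = h2 s := by
    intro s hs
    apply intervalIntegral.integral_congr
    intro τ hτ
    rw [uIcc_of_le hs.1] at hτ
    show k s τ = K s τ
    rw [hKeq s τ hτ.1 hτ.2 hs.2]
  have E4 : ∀ t ∈ Icc α β,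
      (∫ s in α..t, (b s + ∫ τ in α..s, k s τ)) = ∫ s in α..t, g s := by
    intro t ht
    apply intervalIntegral.integral_congr
    intro s hs
    rw [uIcc_of_le ht.1] at hs
    have hs' : s ∈ Icc α β := ⟨hs.1, le_trans hs.2 ht.2⟩
    rw [hg]
    simp only [hB, hcleq s hs', Einner2 s hs']
  have EG : ∀ t ∈ Icc α β,
      (∫ s in α..t, b s * u s ^ 2) + (∫ s in α..t, ∫ τ in α..s, k s τ * u τ ^ 2)
        = ∫ s in α..t, G s := by
    intro t ht
    rw [E1 t ht, E2 t ht, hG, ← intervalIntegral.integral_add (f := fun s => B s * U s ^ 2)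
      ((hBc.mul (hUc.pow 2)).intervalIntegrable _ _) (hFc.intervalIntegrable _ _)]
  have hbound' : ∀ t ∈ Icc α β, U t ≤ a + ∫ s in α..t, G s := by
    intro t ht
    rw [← EG t ht]
    have h1 : U t = u t := by simp only [hU]; rw [hcleq t ht]
    rw [h1]
    have := hbound t ht
    linarith
  -- monotonicity of v and comparison
  have hvmono : ∀ τ t, α ≤ τ → τ ≤ t →
      (∫ s in α..τ, G s) ≤ ∫ s in α..t, G s := by
    intro τ t hτ hτt
    have hsub : (∫ s in α..t, G s) - (∫ s in α..τ, G s) = ∫ s in τ..t, G s :=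
      intervalIntegral.integral_interval_sub_left (hGc.intervalIntegrable _ _)
        (hGc.intervalIntegrable _ _)
    have hnn : 0 ≤ ∫ s in τ..t, G s :=
      intervalIntegral.integral_nonneg hτt (fun s hs => hGnn s (le_trans hτ hs.1))
    linarith
  have hcomp : ∀ t ∈ Icc α β, G t ≤ g t * (a + ∫ s in α..t, G s) ^ 2 := by
    intro t ht
    set v := a + ∫ s in α..t, G s with hv
    have hvnn : 0 ≤ v := by
      have hInn : 0 ≤ ∫ s in α..t, G s :=
        intervalIntegral.integral_nonneg ht.1 (fun s hs => hGnn s hs.1)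
      simp only [hv]; linarith
    have hUle : ∀ τ ∈ Icc α t, U τ ≤ v := by
      intro τ hτ
      have hτ' : τ ∈ Icc α β := ⟨hτ.1, le_trans hτ.2 ht.2⟩
      have h1 := hbound' τ hτ'
      have h2' := hvmono τ t hτ.1 hτ.2
      simp only [hv]; linarith
    have hterm1 : B t * U t ^ 2 ≤ B t * v ^ 2 := by
      apply mul_le_mul_of_nonneg_left _ (hBnn t)
      exact pow_le_pow_left₀ (hUnn t) (hUle t ⟨ht.1, le_refl t⟩) 2
    have hterm2 : F t ≤ h2 t * v ^ 2 := by
      have hstep : F t ≤ ∫ τ in α..t, K t τ * v ^ 2 := by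
        apply intervalIntegral.integral_mono_on ht.1
          ((hKc.comp (continuous_const.prodMk continuous_id)).mul
            (hUc.pow 2) |>.intervalIntegrable _ _)
          (((hKc.comp (continuous_const.prodMk continuous_id)).mul
            continuous_const).intervalIntegrable _ _)
        intro τ hτ
        apply mul_le_mul_of_nonneg_left _ (hKnn t τ)
        exact pow_le_pow_left₀ (hUnn τ) (hUle τ hτ) 2
      calc F t ≤ ∫ τ in α..t, K t τ * v ^ 2 := hstep
      _ = (∫ τ in α..t, K t τ) * v ^ 2 := by
          rw [← intervalIntegral.integral_mul_const]
      _ = h2 t * v ^ 2 := rfl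
    calc G t = B t * U t ^ 2 + F t := rfl
    _ ≤ B t * v ^ 2 + h2 t * v ^ 2 := by linarith
    _ = g t * v ^ 2 := by rw [hg]; ring
  intro t ht hlt
  rw [E4 t ht] at hlt ⊢
  have hres := quad_core α β a hαβ ha U G g hGc hgc hGnn hbound' hcomp t ht hlt
  have h1 : U t = u t := by simp only [hU]; rw [hcleq t ht]
  rw [h1] at hres
  exact hres

theorem quadratic_case
    (α β a : ℝ) (hαβ : α ≤ β) (ha : 0 ≤ a)
    (u b : ℝ → ℝ) (k : ℝ → ℝ → ℝ)
    (hu : ContinuousOn u (Icc α β)) (hb : ContinuousOn b (Icc α β))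
    (hk : ContinuousOn (fun q : ℝ × ℝ => k q.1 q.2)
      {q : ℝ × ℝ | α ≤ q.2 ∧ q.2 ≤ q.1 ∧ q.1 ≤ β})
    (hunn : ∀ t ∈ Icc α β, 0 ≤ u t) (hbnn : ∀ t ∈ Icc α β, 0 ≤ b t)
    (hknn : ∀ t s, α ≤ s → s ≤ t → t ≤ β → 0 ≤ k t s)
    (hbound : ∀ t ∈ Icc α β,
      u t ≤ a + (∫ s in α..t, b s * u s ^ 2)
        + (∫ s in α..t, ∫ τ in α..s, k s τ * u τ ^ 2)) :
    ∀ t ∈ Icc α β,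
      a * (∫ s in α..t, (b s + ∫ τ in α..s, k s τ)) < 1 →
      u t ≤ a / (1 - a * ∫ s in α..t, (b s + ∫ τ in α..s, k s τ)) := by
  rcases eq_or_lt_of_le ha with h0 | hpos
  · -- a = 0
    subst h0
    intro t ht _
    set C := ∫ s in α..t, (b s + ∫ τ in α..s, k s τ) with hC
    have hCnn : 0 ≤ C := by
      rw [hC]
      apply intervalIntegral.integral_nonneg ht.1
      intro s hs
      have hs' : s ∈ Icc α β := ⟨hs.1, le_trans hs.2 ht.2⟩
      have h1 : 0 ≤ ∫ τ in α..s, k s τ :=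
        intervalIntegral.integral_nonneg hs.1
          (fun τ hτ => hknn s τ hτ.1 hτ.2 hs'.2)
      have := hbnn s hs'
      linarith
    have key : u t ≤ 0 := by
      by_contra hut
      push_neg at hut
      set ε := min (1 / (2 * (C + 1))) (u t / 4) with hε
      have hε0 : 0 < ε := lt_min (by positivity) (by linarith)
      have h2 : ε * (2 * (C + 1)) ≤ 1 := by
        rw [← le_div_iff₀ (by positivity)]
        exact min_le_left _ _
      have hεCnn : 0 ≤ ε * C := mul_nonneg hε0.le hCnn
      have hεC : ε * C < 1 := by nlinarith
      have hb' : ∀ s ∈ Icc α β,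
          u s ≤ ε + (∫ x in α..s, b x * u x ^ 2)
            + (∫ x in α..s, ∫ τ in α..x, k x τ * u τ ^ 2) := by
        intro s hs
        have := hbound s hs
        linarith
      have hres := quad_aux α β ε hαβ hε0 u b k hu hb hk hunn hbnn hknn hb' t ht hεC
      rw [← hC] at hres
      have h3 : ε * C ≤ 1 / 2 := by nlinarith
      have h4 : ε / (1 - ε * C) ≤ 2 * ε := by
        rw [div_le_iff₀ (by linarith)]
        nlinarith
      have h5 : ε ≤ u t / 4 := min_le_right _ _
      linarith
    simpa using key
  · exact quad_aux α β a hαβ hpos u b k hu hb hk hunn hbnn hknn hbound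
end

section
/- Let u, b, k be nonnegative continuous functions on [α, β] (k depending on two variables with α ≤ s ≤ t ≤ β), let a > 0 and 0 ≤ p < 1 be constants, and set q = 1 − p > 0. If u(t) ≤ a + ∫_α^t b(s)·u(s)^p ds + ∫_α^t ∫_α^s k(s,τ)·u(τ)^p dτ ds for all t ∈ [α, β], then u(t) ≤ [a^q + q·∫_α^t (b(s) + ∫_α^s k(s,τ) dτ) ds]^{1/q} for all t ∈ [α, β]. -/
open Real Set intervalIntegral

theorem sublinear_double
    (α β a p : ℝ) (hαβ : α ≤ β) (ha : 0 < a) (hp0 : 0 ≤ p) (hp1 : p < 1)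
    (q : ℝ) (hq : q = 1 - p)
    (u b : ℝ → ℝ) (k : ℝ → ℝ → ℝ)
    (hu : ContinuousOn u (Icc α β)) (hb : ContinuousOn b (Icc α β))
    (hk : ContinuousOn (fun q : ℝ × ℝ => k q.1 q.2)
      {q : ℝ × ℝ | α ≤ q.2 ∧ q.2 ≤ q.1 ∧ q.1 ≤ β})
    (hunn : ∀ t ∈ Icc α β, 0 ≤ u t) (hbnn : ∀ t ∈ Icc α β, 0 ≤ b t)
    (hknn : ∀ t s, α ≤ s → s ≤ t → t ≤ β → 0 ≤ k t s)
    (hbound : ∀ t ∈ Icc α β,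
      u t ≤ a + (∫ s in α..t, b s * u s ^ p)
        + (∫ s in α..t, ∫ τ in α..s, k s τ * u τ ^ p)) :
    ∀ t ∈ Icc α β,
      u t ≤ (a ^ q + q * ∫ s in α..t, (b s + ∫ τ in α..s, k s τ))
        ^ (1 / q) := by
  have hq0 : 0 < q := by rw [hq]; linarith
  -- clamp function onto [α, β]
  set c : ℝ → ℝ := fun x => max α (min x β) with hc_def
  have hc_cont : Continuous c := continuous_const.max (continuous_id.min continuous_const)
  have hc_mem : ∀ x, c x ∈ Icc α β := fun x =>
    ⟨le_max_left _ _, max_le hαβ (min_le_right _ _)⟩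
  have hc_eq : ∀ x ∈ Icc α β, c x = x := fun x hx => by
    simp only [hc_def]; rw [min_eq_left hx.2, max_eq_right hx.1]
  -- extended functions
  set U : ℝ → ℝ := fun x => u (c x) with hU_def
  set B : ℝ → ℝ := fun x => b (c x) with hB_def
  set K : ℝ → ℝ → ℝ := fun t τ => k (c t) (max α (min τ (c t))) with hK_def
  have hU_cont : Continuous U := hu.comp_continuous hc_cont hc_mem
  have hB_cont : Continuous B := hb.comp_continuous hc_cont hc_mem
  have hK_cont : Continuous (fun pr : ℝ × ℝ => K pr.1 pr.2) := by
    have he : Continuous (fun pr : ℝ × ℝ => ((c pr.1, max α (min pr.2 (c pr.1))) : ℝ × ℝ)) := by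
      exact (hc_cont.comp continuous_fst).prodMk
        (continuous_const.max ((continuous_snd).min (hc_cont.comp continuous_fst)))
    have hmem : ∀ pr : ℝ × ℝ, ((c pr.1, max α (min pr.2 (c pr.1))) : ℝ × ℝ) ∈
        {q : ℝ × ℝ | α ≤ q.2 ∧ q.2 ≤ q.1 ∧ q.1 ≤ β} := by
      intro pr
      refine ⟨le_max_left _ _, max_le (hc_mem pr.1).1 (min_le_right _ _), (hc_mem pr.1).2⟩
    exact hk.comp_continuous he hmem
  have hU_nn : ∀ x, 0 ≤ U x := fun x => hunn _ (hc_mem x)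
  have hB_nn : ∀ x, 0 ≤ B x := fun x => hbnn _ (hc_mem x)
  have hK_nn : ∀ t τ, 0 ≤ K t τ := fun t τ =>
    hknn _ _ (le_max_left _ _) (max_le (hc_mem t).1 (min_le_right _ _)) (hc_mem t).2
  have hU_eq : ∀ x ∈ Icc α β, U x = u x := fun x hx => by
    simp only [hU_def]; rw [hc_eq x hx]
  have hB_eq : ∀ x ∈ Icc α β, B x = b x := fun x hx => by
    simp only [hB_def]; rw [hc_eq x hx]
  have hK_eq : ∀ t ∈ Icc α β, ∀ τ ∈ Icc α t, K t τ = k t τ := by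
    intro t ht τ hτ
    have hct : c t = t := hc_eq t ht
    simp only [hK_def, hct]
    rw [min_eq_left hτ.2, max_eq_right hτ.1]
  -- powers
  have hUp_cont : Continuous (fun x => U x ^ p) :=
    hU_cont.rpow_const (fun x => Or.inr hp0)
  -- inner integrals
  set w : ℝ → ℝ := fun s => ∫ τ in α..s, K s τ * U τ ^ p with hw_def
  set v : ℝ → ℝ := fun s => ∫ τ in α..s, K s τ with hv_def
  have hw_cont : Continuous w := by
    apply intervalIntegral.continuous_parametric_intervalIntegral_of_continuous
      (f := fun s τ => K s τ * U τ ^ p) (μ := MeasureTheory.volume) ?_ continuous_id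
    exact hK_cont.mul (hUp_cont.comp continuous_snd)
  have hv_cont : Continuous v := by
    apply intervalIntegral.continuous_parametric_intervalIntegral_of_continuous
      (f := fun s τ => K s τ) (μ := MeasureTheory.volume) hK_cont continuous_id
  set F : ℝ → ℝ := fun s => B s * U s ^ p + w s with hF_def
  set G : ℝ → ℝ := fun s => B s + v s with hG_def
  have hF_cont : Continuous F := (hB_cont.mul hUp_cont).add hw_cont
  have hG_cont : Continuous G := hB_cont.add hv_cont
  -- V : upper solution
  set V : ℝ → ℝ := fun t => a + ∫ s in α..t, F s with hV_def
  have hV_deriv : ∀ t, HasDerivAt V (F t) t := fun t =>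
    ((hF_cont.integral_hasStrictDerivAt α t).hasDerivAt).const_add a
  have hV_cont : Continuous V := by
    have : Differentiable ℝ V := fun t => (hV_deriv t).differentiableAt
    exact this.continuous
  -- nonnegativity of F on [α, β]
  have hw_nn : ∀ s, α ≤ s → 0 ≤ w s := by
    intro s hs
    exact intervalIntegral.integral_nonneg hs
      (fun τ _ => mul_nonneg (hK_nn s τ) (Real.rpow_nonneg (hU_nn τ) p))
  have hv_nn : ∀ s, α ≤ s → 0 ≤ v s := by
    intro s hs
    exact intervalIntegral.integral_nonneg hs (fun τ _ => hK_nn s τ)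
  have hF_nn : ∀ s, α ≤ s → 0 ≤ F s := by
    intro s hs
    exact add_nonneg (mul_nonneg (hB_nn s) (Real.rpow_nonneg (hU_nn s) p)) (hw_nn s hs)
  -- V is positive on [α, β]
  have hV_pos : ∀ t ∈ Icc α β, 0 < V t := by
    intro t ht
    have : 0 ≤ ∫ s in α..t, F s :=
      intervalIntegral.integral_nonneg ht.1 (fun s hs => hF_nn s hs.1)
    simp only [hV_def]; linarith
  -- V is monotone on [α, β]
  have hV_mono : MonotoneOn V (Icc α β) := by
    apply monotoneOn_of_hasDerivWithinAt_nonneg (convex_Icc α β) hV_cont.continuousOn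
      (f' := F) (fun x _ => (hV_deriv x).hasDerivWithinAt)
    intro x hx
    rw [interior_Icc] at hx
    exact hF_nn x hx.1.le
  -- u ≤ V on [α, β]
  have hu_le_V : ∀ t ∈ Icc α β, u t ≤ V t := by
    intro t ht
    have h1 : ∀ s ∈ Icc α β, B s * U s ^ p = b s * u s ^ p := by
      intro s hs; rw [hB_eq s hs, hU_eq s hs]
    have hsub : Icc α t ⊆ Icc α β := Icc_subset_Icc le_rfl ht.2
    have h2 : ∀ s ∈ Icc α t, w s = ∫ τ in α..s, k s τ * u τ ^ p := by
      intro s hs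
      apply intervalIntegral.integral_congr
      intro τ hτ
      rw [uIcc_of_le hs.1] at hτ
      have hτβ : τ ∈ Icc α β := (Icc_subset_Icc le_rfl (hs.2.trans ht.2)) hτ
      simp only
      rw [hK_eq s (hsub hs) τ hτ, hU_eq τ hτβ]
    have heq : (∫ s in α..t, F s) =
        (∫ s in α..t, b s * u s ^ p) + (∫ s in α..t, ∫ τ in α..s, k s τ * u τ ^ p) := by
      rw [← intervalIntegral.integral_add]
      · apply intervalIntegral.integral_congr
        intro s hs
        rw [uIcc_of_le ht.1] at hs
        simp only [hF_def]
        rw [h1 s (hsub hs), h2 s hs]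
      · apply ContinuousOn.intervalIntegrable
        rw [uIcc_of_le ht.1]
        intro s hs
        exact (((hB_cont.mul hUp_cont).continuousAt).continuousWithinAt).congr
          (fun x hx => (h1 x (hsub hx)).symm) (h1 s (hsub hs)).symm
      · -- integrability of the inner double integral as a function of s
        apply ContinuousOn.intervalIntegrable
        rw [uIcc_of_le ht.1]
        intro s hs
        have : (fun s => ∫ τ in α..s, k s τ * u τ ^ p) =ᶠ[nhdsWithin s (Icc α t)] w := by
          filter_upwards [self_mem_nhdsWithin] with x hx
          exact (h2 x hx).symm
        exact ((hw_cont.continuousAt).continuousWithinAt).congr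
          (fun x hx => (h2 x hx).symm) (h2 s hs).symm
    have := hbound t ht
    simp only [hV_def]
    rw [heq]; linarith
  -- key inequality : F t ≤ V t ^ p * G t on [α, β]
  have hkey : ∀ t ∈ Icc α β, F t ≤ V t ^ p * G t := by
    intro t ht
    have hVt := hV_pos t ht
    have hsub : Icc α t ⊆ Icc α β := Icc_subset_Icc le_rfl ht.2
    have hUle : ∀ τ ∈ Icc α t, U τ ^ p ≤ V t ^ p := by
      intro τ hτ
      have hτβ : τ ∈ Icc α β := hsub hτ
      have : U τ ≤ V t := by
        rw [hU_eq τ hτβ]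
        exact (hu_le_V τ hτβ).trans (hV_mono hτβ ht hτ.2)
      exact Real.rpow_le_rpow (hU_nn τ) this hp0
    have h1 : B t * U t ^ p ≤ B t * V t ^ p :=
      mul_le_mul_of_nonneg_left (hUle t ⟨ht.1, le_rfl⟩) (hB_nn t)
    have h2 : w t ≤ v t * V t ^ p := by
      have : w t ≤ ∫ τ in α..t, K t τ * V t ^ p := by
        apply intervalIntegral.integral_mono_on ht.1
        · exact Continuous.intervalIntegrable (by fun_prop) α t
        · exact Continuous.intervalIntegrable (by fun_prop) α t
        · intro τ hτ
          exact mul_le_mul_of_nonneg_left (hUle τ hτ) (hK_nn t τ)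
      rwa [intervalIntegral.integral_mul_const] at this
    simp only [hF_def, hG_def]
    nlinarith [hw_nn t ht.1, hv_nn t ht.1]
  -- the comparison function H
  set P : ℝ → ℝ := fun t => ∫ s in α..t, G s with hP_def
  have hP_deriv : ∀ t, HasDerivAt P (G t) t := fun t =>
    (hG_cont.integral_hasStrictDerivAt α t).hasDerivAt
  have hP_cont : Continuous P :=
    (Differentiable.continuous (fun t => (hP_deriv t).differentiableAt))
  set W : ℝ → ℝ := fun t => V t ^ q with hW_def
  have hW_cont : Continuous W := hV_cont.rpow_const (fun x => Or.inr hq0.le)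
  set H : ℝ → ℝ := fun t => a ^ q + q * P t - W t with hH_def
  have hH_cont : Continuous H := (continuous_const.add (continuous_const.mul hP_cont)).sub hW_cont
  have hH_deriv : ∀ t ∈ Icc α β, HasDerivAt H (q * G t - F t * q * V t ^ (q - 1)) t := by
    intro t ht
    have hW_deriv : HasDerivAt W (F t * q * V t ^ (q - 1)) t :=
      (hV_deriv t).rpow_const (Or.inl (hV_pos t ht).ne')
    exact ((((hP_deriv t).const_mul q).const_add (a ^ q)).sub hW_deriv)
  have hH_deriv_nn : ∀ t ∈ Icc α β, 0 ≤ q * G t - F t * q * V t ^ (q - 1) := by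
    intro t ht
    have hVt := hV_pos t ht
    have hVq1 : (0:ℝ) ≤ V t ^ (q - 1) := Real.rpow_nonneg hVt.le _
    have h1 : F t * (q * V t ^ (q - 1)) ≤ (V t ^ p * G t) * (q * V t ^ (q - 1)) :=
      mul_le_mul_of_nonneg_right (hkey t ht) (mul_nonneg hq0.le hVq1)
    have h2 : V t ^ p * V t ^ (q - 1) = 1 := by
      rw [← Real.rpow_add hVt]
      have : p + (q - 1) = 0 := by rw [hq]; ring
      rw [this, Real.rpow_zero]
    have h3 : (V t ^ p * G t) * (q * V t ^ (q - 1)) = q * G t := by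
      calc (V t ^ p * G t) * (q * V t ^ (q - 1))
          = q * G t * (V t ^ p * V t ^ (q - 1)) := by ring
        _ = q * G t := by rw [h2]; ring
    nlinarith
  have hH_mono : MonotoneOn H (Icc α β) := by
    apply monotoneOn_of_hasDerivWithinAt_nonneg (convex_Icc α β) hH_cont.continuousOn
      (f' := fun t => q * G t - F t * q * V t ^ (q - 1))
    · intro x hx
      rw [interior_Icc] at hx
      exact (hH_deriv x (Ioo_subset_Icc_self hx)).hasDerivWithinAt
    · intro x hx
      rw [interior_Icc] at hx
      exact hH_deriv_nn x (Ioo_subset_Icc_self hx)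
  have hHα : H α = 0 := by
    simp only [hH_def, hW_def, hV_def, hP_def, intervalIntegral.integral_same]
    ring_nf
  -- conclude
  intro t ht
  have hHt : 0 ≤ H t := by
    rw [← hHα]
    exact hH_mono (left_mem_Icc.mpr hαβ) ht ht.1
  have hWle : V t ^ q ≤ a ^ q + q * P t := by
    simp only [hH_def, hW_def] at hHt; linarith
  have hPeq : P t = ∫ s in α..t, (b s + ∫ τ in α..s, k s τ) := by
    apply intervalIntegral.integral_congr
    intro s hs
    rw [uIcc_of_le ht.1] at hs
    have hsβ : s ∈ Icc α β := Icc_subset_Icc le_rfl ht.2 hs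
    simp only [hG_def, hB_eq s hsβ]
    congr 1
    apply intervalIntegral.integral_congr
    intro τ hτ
    rw [uIcc_of_le hs.1] at hτ
    exact hK_eq s hsβ τ hτ
  have hVt := hV_pos t ht
  have hfin : V t ≤ (a ^ q + q * P t) ^ (1 / q) := by
    have h1 : V t = (V t ^ q) ^ (1 / q) := by
      rw [one_div, Real.rpow_rpow_inv hVt.le hq0.ne']
    rw [h1]
    exact Real.rpow_le_rpow (Real.rpow_nonneg hVt.le q) hWle
      (by positivity)
  rw [← hPeq]
  exact (hu_le_V t ht).trans hfin
end
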